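/- Let X = {P_1,...,P_r} be distinct points of P^n_k with dual linear forms L_1,...,L_r and socle degree s. Given u ≥ 1 and nonzero α_1,...,α_r ∈ k^*, the R-submodule M of Γ generated by F_t = (1/(t+u)!) Σ_{i=1}^r α_i L_i^{t+u}, t ≥ 1, equals the R-submodule generated by all powers L_i^t (t ≥ 1, 1 ≤ i ≤ r); consequently M = I(X)^⊥ and I(X) = Ann_R(M). -/

import Mathlib

open MvPolynomial
open scoped Classical

noncomputable section

variable {k : Type} [Field k]

/-- Apolarity action: `apol f F = f(∂/∂y) F`, defined on monomials by
`x^α ∘ y^β = (β!/(β-α)!) y^(β-α)` if `α ≤ β` and `0` otherwise. -/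
def apol {n : ℕ} (f F : MvPolynomial (Fin n) k) : MvPolynomial (Fin n) k :=
  (AddMonoidAlgebra.coeff f).sum fun α c => (AddMonoidAlgebra.coeff F).sum fun β b =>
    if α ≤ β then
      MvPolynomial.monomial (β - α)
        (c * b * (β.prod fun i m => ((m.descFactorial (α i) : k))))
    else 0

/-- The linear form `a₀ y₀ + ⋯ + aₙ yₙ` associated to a point with coordinates `a`. -/
def dualLin {n : ℕ} (a : Fin n → k) : MvPolynomial (Fin n) k :=
  ∑ j, MvPolynomial.C (a j) * MvPolynomial.X j

/-- Macaulay inverse system of a set of polynomials. -/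
def perp {n : ℕ} (S : Set (MvPolynomial (Fin n) k)) : Set (MvPolynomial (Fin n) k) :=
  {F | ∀ g ∈ S, apol g F = 0}

/-- The `R`-submodule of `Γ` generated by `S` (as the `k`-span of the apolarity orbit). -/
def Rspan {n : ℕ} (S : Set (MvPolynomial (Fin n) k)) : Submodule k (MvPolynomial (Fin n) k) :=
  Submodule.span k {G | ∃ g, ∃ F ∈ S, G = apol g F}

/-- The homogeneous vanishing ideal of a family of points (given by affine representatives). -/
def projIdeal {n r : ℕ} (a : Fin r → Fin n → k) : Ideal (MvPolynomial (Fin n) k) :=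
  ⨅ i, ⨅ t : k, RingHom.ker (MvPolynomial.eval (t • a i))

/-- Hilbert function of `R/I`: `dim R_j − dim I_j`. -/
def HF {n : ℕ} (I : Ideal (MvPolynomial (Fin n) k)) (j : ℕ) : ℕ :=
  Module.finrank k (homogeneousSubmodule (Fin n) k j)
    - Module.finrank k
        (Submodule.restrictScalars k I ⊓ homogeneousSubmodule (Fin n) k j : Submodule k _)

/-- `s` is the socle degree: least integer with `HF I t = r` for all `t ≥ s`. -/
def IsSocleDegree {n : ℕ} (I : Ideal (MvPolynomial (Fin n) k)) (r s : ℕ) : Prop :=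
  (∀ t, s ≤ t → HF I t = r) ∧ ∀ s', (∀ t, s' ≤ t → HF I t = r) → s ≤ s'

/-- The affine representatives define distinct points of projective space. -/
def ProjDistinct {n r : ℕ} (a : Fin r → Fin n → k) : Prop :=
  (∀ i, a i ≠ 0) ∧ ∀ i j, i ≠ j → ∀ c : k, a i ≠ c • a j

/-- G-admissibility (with `F 0` playing the role of `F₁`). -/
def GAdmissible {n : ℕ} (z : MvPolynomial (Fin n) k) (F : ℕ → MvPolynomial (Fin n) k) : Prop :=
  apol z (F 0) = 0 ∧ (∀ l, apol z (F (l + 1)) = F l) ∧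
  ∀ l, (fun g => apol g (F (l + 1))) '' {g | ∀ G ∈ (Rspan {F l} : Submodule k (MvPolynomial (Fin n) k)), apol g G = 0}
      = ((Rspan {F 0} : Submodule k (MvPolynomial (Fin n) k)) : Set (MvPolynomial (Fin n) k))

/-- The family `F_t = (1/(t+u)!) Σ αᵢ Lᵢ^{t+u}`. -/
def famF {n r : ℕ} (a : Fin r → Fin n → k) (α : Fin r → k) (u t : ℕ) :
    MvPolynomial (Fin n) k :=
  (((t + u).factorial : k))⁻¹ • ∑ i, MvPolynomial.C (α i) * dualLin (a i) ^ (t + u)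

/-- `X` is arithmetically Gorenstein, tested with the linear nonzerodivisor `z`:
the inverse system of the Artinian reduction `I(X)+(z)` is cyclic. -/
def IsArithGorAt {n r : ℕ} (a : Fin r → Fin n → k) (z : MvPolynomial (Fin n) k) : Prop :=
  ∃ F, perp ((projIdeal a ⊔ Ideal.span {z} : Ideal _) : Set (MvPolynomial (Fin n) k))
    = ((Rspan {F} : Submodule k (MvPolynomial (Fin n) k)) : Set (MvPolynomial (Fin n) k))

/-- `X` is arithmetically Gorenstein (for some linear form not vanishing at any point). -/
def IsArithGor {n r : ℕ} (a : Fin r → Fin n → k) : Prop :=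
  ∃ b : Fin n → k, (∀ i, (∑ j, b j * a i j) ≠ 0) ∧ IsArithGorAt a (dualLin b)

/-!
Everything reduces to one description of the inverse system: `I(X)^⊥` is the span `V` of all
powers `L_i^m`. A form `g` of degree `d` acts on a power by
`g ∘ L^N = N (N - 1) ⋯ (N - d + 1) g(P) L^(N - d)`, so `I(X)` kills `V`, and a form killing
`L_i^(deg g + 1)` has all its homogeneous components vanishing at `P_i`; hence
`I(X) = Ann_R(V)`. A form of large degree vanishing at every point except `P_i` sends a suitable
`F_t` to a nonzero multiple of any prescribed `L_i^m`, so the `F_t` generate `V`, and so do the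
`L_i^t` with `t ≥ 1`. Finally `I(X)^⊥ ⊆ V` degree by degree: under the perfect pairing
`(g, F) ↦ (g ∘ F)(0)` on forms of degree `e`, a functional killing every `L_i^e` is represented
by a form vanishing at all the points, i.e. by an element of `I(X)`.
-/
section Apolarity

variable {n : ℕ}

lemma apol_add_right (f F G : MvPolynomial (Fin n) k) :
    apol f (F + G) = apol f F + apol f G := by
  simp only [apol, AddMonoidAlgebra.coeff_add]
  rw [← Finsupp.sum_add]
  refine Finsupp.sum_congr fun α _ => Finsupp.sum_add_index' (fun β => by simp) fun β b b' => ?_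
  split_ifs
  · rw [mul_add, add_mul, map_add]
  · rw [add_zero]

lemma apol_add_left (f g F : MvPolynomial (Fin n) k) :
    apol (f + g) F = apol f F + apol g F := by
  simp only [apol, AddMonoidAlgebra.coeff_add]
  refine Finsupp.sum_add_index' (fun α => by simp) fun α c c' => ?_
  rw [← Finsupp.sum_add]
  refine Finsupp.sum_congr fun β _ => ?_
  split_ifs
  · rw [add_mul, add_mul, map_add]
  · rw [add_zero]

lemma apol_smul_right (f F : MvPolynomial (Fin n) k) (c : k) :
    apol f (c • F) = c • apol f F := by
  simp only [apol, AddMonoidAlgebra.coeff_smul]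
  rw [Finsupp.smul_sum]
  refine Finsupp.sum_congr fun α _ => ?_
  rw [Finsupp.sum_smul_index' (fun β => by simp), Finsupp.smul_sum]
  refine Finsupp.sum_congr fun β _ => ?_
  split_ifs
  · rw [smul_monomial, smul_eq_mul]
    congr 1
    ring
  · rw [smul_zero]

lemma apol_monomial_monomial (α β : Fin n →₀ ℕ) (c b : k) :
    apol (monomial α c) (monomial β b)
      = if α ≤ β then monomial (β - α) (c * b * ∏ i, ((β i).descFactorial (α i) : k)) else 0 := by
  have hc : AddMonoidAlgebra.coeff (monomial α c) = Finsupp.single α c := rfl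
  have hb : AddMonoidAlgebra.coeff (monomial β b) = Finsupp.single β b := rfl
  rw [apol, hc, hb, Finsupp.sum_single_index (by simp), Finsupp.sum_single_index (by simp)]
  split_ifs with h
  · rw [Finsupp.prod, Finset.prod_subset (Finset.subset_univ _) fun i _ hi => ?_]
    have hβ : β i = 0 := Finsupp.notMem_support_iff.mp hi
    simp [hβ, Nat.le_zero.mp (hβ ▸ h i)]
  · rfl

def apolLinearMap (f : MvPolynomial (Fin n) k) :
    MvPolynomial (Fin n) k →ₗ[k] MvPolynomial (Fin n) k where
  toFun := apol f
  map_add' := apol_add_right f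
  map_smul' c F := apol_smul_right f F c

def apolAddMonoidHom (F : MvPolynomial (Fin n) k) :
    MvPolynomial (Fin n) k →+ MvPolynomial (Fin n) k where
  toFun f := apol f F
  map_zero' := by simpa using apol_add_left 0 0 F
  map_add' f g := apol_add_left f g F

lemma apol_zero_right (f : MvPolynomial (Fin n) k) : apol f 0 = 0 :=
  map_zero (apolLinearMap f)

lemma apol_sum_right {ι : Type*} (f : MvPolynomial (Fin n) k) (s : Finset ι)
    (F : ι → MvPolynomial (Fin n) k) : apol f (∑ i ∈ s, F i) = ∑ i ∈ s, apol f (F i) :=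
  map_sum (apolLinearMap f) F s

lemma apol_sum_left {ι : Type*} (s : Finset ι) (f : ι → MvPolynomial (Fin n) k)
    (F : MvPolynomial (Fin n) k) : apol (∑ i ∈ s, f i) F = ∑ i ∈ s, apol (f i) F :=
  map_sum (apolAddMonoidHom F) f s

lemma apol_monomial_apol_monomial (α α' β : Fin n →₀ ℕ) (c c' b : k) :
    apol (monomial α c) (apol (monomial α' c') (monomial β b))
      = apol (monomial (α + α') (c * c')) (monomial β b) := by
  rw [apol_monomial_monomial α' β, apol_monomial_monomial (α + α') β]
  by_cases h' : α' ≤ β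
  · rw [if_pos h', apol_monomial_monomial]
    by_cases h : α ≤ β - α'
    · rw [if_pos h, if_pos ((le_tsub_iff_right h').mp h), tsub_tsub, add_comm α']
      congr 1
      simp_rw [Finsupp.add_apply, Finsupp.tsub_apply, ← Nat.descFactorial_mul_descFactorial
          (Nat.le_add_left (α' _) (α _)), Nat.add_sub_cancel, Nat.cast_mul,
        Finset.prod_mul_distrib]
      ring
    · rw [if_neg h, if_neg (mt (le_tsub_iff_right h').mpr h)]
  · rw [if_neg h', if_neg fun h => h' (le_add_self.trans h), apol_zero_right]

lemma apol_mul (f g F : MvPolynomial (Fin n) k) : apol (f * g) F = apol f (apol g F) := by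
  induction f using MvPolynomial.induction_on' with
  | add f f' hf hf' => rw [add_mul, apol_add_left, apol_add_left, hf, hf']
  | monomial α c =>
  induction g using MvPolynomial.induction_on' with
  | add g g' hg hg' => rw [mul_add, apol_add_left, apol_add_left, apol_add_right, hg, hg']
  | monomial α' c' =>
  induction F using MvPolynomial.induction_on' with
  | add F F' hF hF' => rw [apol_add_right, apol_add_right, apol_add_right, hF, hF']
  | monomial β b => rw [monomial_mul, apol_monomial_apol_monomial]

lemma apol_C (c : k) (F : MvPolynomial (Fin n) k) : apol (C c) F = c • F := by
  induction F using MvPolynomial.induction_on' with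
  | add F F' hF hF' => rw [apol_add_right, hF, hF', smul_add]
  | monomial β b => simp [← monomial_zero', apol_monomial_monomial, smul_monomial]

lemma apol_one (F : MvPolynomial (Fin n) k) : apol 1 F = F := by
  rw [← C_1, apol_C, one_smul]

lemma apol_X (j : Fin n) (F : MvPolynomial (Fin n) k) : apol (X j) F = pderiv j F := by
  induction F using MvPolynomial.induction_on' with
  | add F F' hF hF' => rw [apol_add_right, map_add, hF, hF']
  | monomial β b =>
    rw [X, apol_monomial_monomial, pderiv_monomial]
    split_ifs with h
    · rw [Finset.prod_eq_single j (fun i _ hij => by simp [Finsupp.single_eq_of_ne hij])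
        (by simp)]
      simp
    · rw [Nat.lt_one_iff.mp (not_le.mp (mt Finsupp.single_le_iff.mpr h))]
      simp

end Apolarity

section DualLin

variable {n : ℕ}

lemma isHomogeneous_dualLin (a : Fin n → k) : (dualLin a).IsHomogeneous 1 :=
  IsHomogeneous.sum _ _ _ fun j _ => isHomogeneous_C_mul_X (a j) j

lemma isHomogeneous_dualLin_pow (a : Fin n → k) (m : ℕ) : (dualLin a ^ m).IsHomogeneous m := by
  simpa using (isHomogeneous_dualLin a).pow m

lemma pderiv_dualLin (a : Fin n → k) (j : Fin n) : pderiv j (dualLin a) = C (a j) := by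
  simp [dualLin, pderiv_X, Pi.single_apply]

lemma dualLin_ne_zero {a : Fin n → k} (ha : a ≠ 0) : dualLin a ≠ 0 := by
  obtain ⟨j, hj⟩ := Function.ne_iff.mp ha
  intro h
  have := pderiv_dualLin a j
  rw [h, map_zero, eq_comm, C_eq_zero] at this
  exact hj this

lemma apol_X_dualLin_pow (a : Fin n → k) (j : Fin n) (N : ℕ) :
    apol (X j) (dualLin a ^ N) = ((N : k) * a j) • dualLin a ^ (N - 1) := by
  rw [apol_X, pderiv_pow, pderiv_dualLin, smul_eq_C_mul, map_mul, map_natCast]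
  ring

lemma apol_monomial_dualLin_pow (a : Fin n → k) (β : Fin n →₀ ℕ) (c : k) (N : ℕ) :
    apol (monomial β c) (dualLin a ^ N)
      = (N.descFactorial β.degree * eval a (monomial β c)) • dualLin a ^ (N - β.degree) := by
  induction hd : β.degree generalizing β with
  | zero =>
    rw [(Finsupp.degree_eq_zero_iff β).mp hd, monomial_zero', apol_C]
    simp
  | succ d ih =>
    obtain ⟨j, hj⟩ : ∃ j, β j ≠ 0 := by
      by_contra! h
      simp [(Finsupp.degree_eq_zero_iff β).mpr (Finsupp.ext h)] at hd
    have hβ : β - Finsupp.single j 1 + Finsupp.single j 1 = β :=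
      tsub_add_cancel_of_le (Finsupp.single_le_iff.mpr (Nat.one_le_iff_ne_zero.mpr hj))
    have hd' : (β - Finsupp.single j 1).degree = d := by
      rw [← hβ, map_add, Finsupp.degree_single] at hd
      omega
    rw [← hβ, monomial_add_single, pow_one, mul_comm, apol_mul, ih _ hd', apol_smul_right,
      apol_X_dualLin_pow, smul_smul, Nat.sub_sub, Nat.descFactorial_succ, map_mul, eval_X]
    push_cast
    ring_nf

lemma apol_dualLin_pow_of_isHomogeneous {g : MvPolynomial (Fin n) k} {d : ℕ}
    (hg : g.IsHomogeneous d) (a : Fin n → k) (N : ℕ) :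
    apol g (dualLin a ^ N) = (N.descFactorial d * eval a g) • dualLin a ^ (N - d) := by
  conv_lhs => rw [g.as_sum, apol_sum_left]
  conv_rhs => rw [g.as_sum, map_sum, Finset.mul_sum, Finset.sum_smul]
  refine Finset.sum_congr rfl fun β hβ => ?_
  have hβd : β.degree = d := by
    rw [Finsupp.degree_eq_weight_one]
    exact hg (mem_support_iff.mp hβ)
  rw [apol_monomial_dualLin_pow, hβd]

lemma apol_dualLin_pow (g : MvPolynomial (Fin n) k) (a : Fin n → k) (N : ℕ) :
    apol g (dualLin a ^ N) = ∑ d ∈ Finset.range (g.totalDegree + 1),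
      (N.descFactorial d * eval a (homogeneousComponent d g)) • dualLin a ^ (N - d) := by
  conv_lhs => rw [← g.sum_homogeneousComponent, apol_sum_left]
  exact Finset.sum_congr rfl fun d _ =>
    apol_dualLin_pow_of_isHomogeneous (homogeneousComponent_isHomogeneous d g) a N

end DualLin

section VanishingIdeal

variable {n r : ℕ}

lemma eval_smul_monomial (t : k) (a : Fin n → k) (β : Fin n →₀ ℕ) (c : k) :
    eval (t • a) (monomial β c) = t ^ β.degree * eval a (monomial β c) := by
  simp only [eval_monomial, Pi.smul_apply, smul_eq_mul, mul_pow, Finsupp.prod,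
    Finset.prod_mul_distrib, Finset.prod_pow_eq_pow_sum, Finsupp.degree_apply]
  ring

lemma MvPolynomial.IsHomogeneous.eval_smul {g : MvPolynomial (Fin n) k} {d : ℕ}
    (hg : g.IsHomogeneous d) (t : k) (a : Fin n → k) : eval (t • a) g = t ^ d * eval a g := by
  conv_lhs => rw [g.as_sum, map_sum]
  conv_rhs => rw [g.as_sum, map_sum, Finset.mul_sum]
  refine Finset.sum_congr rfl fun β hβ => ?_
  have hβd : β.degree = d := by
    rw [Finsupp.degree_eq_weight_one]
    exact hg (mem_support_iff.mp hβ)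
  rw [eval_smul_monomial, hβd]

lemma eval_smul_eq_sum (t : k) (a : Fin n → k) (g : MvPolynomial (Fin n) k) :
    eval (t • a) g = ∑ d ∈ Finset.range (g.totalDegree + 1),
      eval a (homogeneousComponent d g) * t ^ d := by
  conv_lhs => rw [← g.sum_homogeneousComponent, map_sum]
  exact Finset.sum_congr rfl fun d _ =>
    ((homogeneousComponent_isHomogeneous d g).eval_smul t a).trans (mul_comm _ _)

lemma mem_projIdeal_iff (a : Fin r → Fin n → k) (g : MvPolynomial (Fin n) k) :
    g ∈ projIdeal a ↔ ∀ i (t : k), eval (t • a i) g = 0 := by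
  simp [projIdeal, RingHom.mem_ker]

lemma eval_homogeneousComponent_eq_zero_of_forall_eval_smul [Infinite k]
    {a : Fin n → k} {g : MvPolynomial (Fin n) k} (h : ∀ t : k, eval (t • a) g = 0) (d : ℕ) :
    eval a (homogeneousComponent d g) = 0 := by
  let q : Polynomial k := ∑ e ∈ Finset.range (g.totalDegree + 1),
    Polynomial.C (eval a (homogeneousComponent e g)) * Polynomial.X ^ e
  have hq : q = 0 := Polynomial.funext fun t => by
    simpa [q, Polynomial.eval_finsetSum, ← eval_smul_eq_sum] using h t
  by_cases hd : d ≤ g.totalDegree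
  · simpa [q, Polynomial.finsetSum_coeff, Polynomial.coeff_C_mul_X_pow, Nat.lt_succ_iff, hd]
      using congrArg (Polynomial.coeff · d) hq
  · rw [homogeneousComponent_eq_zero _ _ (not_le.mp hd), map_zero]

lemma mem_projIdeal_iff_homogeneousComponent [Infinite k] (a : Fin r → Fin n → k)
    (g : MvPolynomial (Fin n) k) :
    g ∈ projIdeal a ↔ ∀ i d, eval (a i) (homogeneousComponent d g) = 0 := by
  rw [mem_projIdeal_iff]
  refine ⟨fun h i => eval_homogeneousComponent_eq_zero_of_forall_eval_smul (h i), fun h i t => ?_⟩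
  rw [eval_smul_eq_sum]
  exact Finset.sum_eq_zero fun d _ => by rw [h i d, zero_mul]

lemma mem_projIdeal_of_isHomogeneous {g : MvPolynomial (Fin n) k} {d : ℕ}
    (hg : g.IsHomogeneous d) {a : Fin r → Fin n → k} (h : ∀ i, eval (a i) g = 0) :
    g ∈ projIdeal a :=
  (mem_projIdeal_iff a g).mpr fun i t => by rw [hg.eval_smul, h i, mul_zero]

end VanishingIdeal

section Duality

variable {n : ℕ}

lemma coeff_zero_apol_monomial (β : Fin n →₀ ℕ) (c : k) (F : MvPolynomial (Fin n) k) :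
    coeff 0 (apol (monomial β c) F) = c * coeff β F * ∏ i, ((β i).factorial : k) := by
  induction F using MvPolynomial.induction_on' with
  | add F F' hF hF' => rw [apol_add_right, coeff_add, hF, hF', coeff_add]; ring
  | monomial β' b =>
    rw [apol_monomial_monomial]
    by_cases h : β' = β
    · subst h
      simp only [le_refl, if_true, tsub_self, coeff_monomial, Nat.descFactorial_self]
    · have hne : ¬ (β ≤ β' ∧ β' - β = 0) := fun ⟨hle, hsub⟩ =>
        h (le_antisymm (tsub_eq_zero_iff_le.mp hsub) hle)
      rw [coeff_monomial, if_neg h]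
      split_ifs with hle <;> simp_all [coeff_monomial]

lemma coeff_zero_apol_dualLin_pow_of_isHomogeneous {g : MvPolynomial (Fin n) k} {e : ℕ}
    (hg : g.IsHomogeneous e) (a : Fin n → k) :
    coeff 0 (apol g (dualLin a ^ e)) = e.factorial * eval a g := by
  rw [apol_dualLin_pow_of_isHomogeneous hg, Nat.sub_self, pow_zero, coeff_smul, coeff_zero_one,
    smul_eq_mul, mul_one, Nat.descFactorial_self]

lemma support_subset_finsuppAntidiag {g : MvPolynomial (Fin n) k} {e : ℕ}
    (hg : g.IsHomogeneous e) : g.support ⊆ Finset.finsuppAntidiag Finset.univ e := by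
  intro β hβ
  rw [Finset.mem_finsuppAntidiag, ← Finsupp.degree_eq_sum, Finsupp.degree_eq_weight_one]
  exact ⟨hg (mem_support_iff.mp hβ), Finset.subset_univ _⟩

/-- The degree-`e` form `g` with `(g ∘ F)(0) = φ(F)` for all forms `F` of degree `e`. -/
def dualForm (e : ℕ) (φ : Module.Dual k (MvPolynomial (Fin n) k)) : MvPolynomial (Fin n) k :=
  ∑ β ∈ Finset.finsuppAntidiag Finset.univ e,
    monomial β ((∏ i, ((β i).factorial : k))⁻¹ * φ (monomial β 1))

lemma isHomogeneous_dualForm (e : ℕ) (φ : Module.Dual k (MvPolynomial (Fin n) k)) :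
    (dualForm e φ).IsHomogeneous e := by
  refine IsHomogeneous.sum _ _ _ fun β hβ => isHomogeneous_monomial _ ?_
  rw [Finsupp.degree_eq_sum]
  exact (Finset.mem_finsuppAntidiag.mp hβ).1

lemma coeff_zero_apol_dualForm [CharZero k] (e : ℕ)
    (φ : Module.Dual k (MvPolynomial (Fin n) k)) (F : MvPolynomial (Fin n) k) :
    coeff 0 (apol (dualForm e φ) F) = φ (homogeneousComponent e F) := by
  set T := Finset.finsuppAntidiag (Finset.univ : Finset (Fin n)) e
  have hFe : homogeneousComponent e F = ∑ β ∈ T, coeff β F • monomial β 1 := by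
    conv_lhs => rw [(homogeneousComponent e F).as_sum]
    rw [Finset.sum_subset (support_subset_finsuppAntidiag
      (homogeneousComponent_isHomogeneous e F)) fun β _ hβ => by rw [notMem_support_iff.mp hβ,
        monomial_zero]]
    refine Finset.sum_congr rfl fun β hβ => ?_
    rw [coeff_homogeneousComponent, if_pos, smul_monomial, smul_eq_mul, mul_one]
    rw [Finsupp.degree_eq_sum]
    exact (Finset.mem_finsuppAntidiag.mp hβ).1
  rw [dualForm, apol_sum_left, coeff_sum, hFe, map_sum]
  refine Finset.sum_congr rfl fun β _ => ?_
  have : (∏ i, ((β i).factorial : k)) ≠ 0 :=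
    Finset.prod_ne_zero_iff.mpr fun i _ => Nat.cast_ne_zero.mpr (Nat.factorial_ne_zero _)
  rw [coeff_zero_apol_monomial, map_smul, smul_eq_mul]
  field_simp

end Duality

section InverseSystem

variable {n r : ℕ}

lemma apol_mem_Rspan (g : MvPolynomial (Fin n) k) {S : Set (MvPolynomial (Fin n) k)}
    {F : MvPolynomial (Fin n) k} (hF : F ∈ S) : apol g F ∈ Rspan S :=
  Submodule.subset_span ⟨g, F, hF, rfl⟩

lemma subset_Rspan (S : Set (MvPolynomial (Fin n) k)) : S ⊆ Rspan S := fun F hF => by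
  simpa [apol_one] using apol_mem_Rspan 1 hF

lemma Rspan_le {S : Set (MvPolynomial (Fin n) k)} {W : Submodule k (MvPolynomial (Fin n) k)}
    (hS : S ⊆ W) (hW : ∀ g, ∀ F ∈ W, apol g F ∈ W) : Rspan S ≤ W :=
  Submodule.span_le.mpr fun _ ⟨g, F, hF, hG⟩ => hG ▸ hW g F (hS hF)

def powerSpan (a : Fin r → Fin n → k) : Submodule k (MvPolynomial (Fin n) k) :=
  Submodule.span k {G | ∃ i m, G = dualLin (a i) ^ m}

lemma dualLin_pow_mem_powerSpan (a : Fin r → Fin n → k) (i : Fin r) (m : ℕ) :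
    dualLin (a i) ^ m ∈ powerSpan a :=
  Submodule.subset_span ⟨i, m, rfl⟩

lemma powerSpan_le {a : Fin r → Fin n → k} {W : Submodule k (MvPolynomial (Fin n) k)}
    (h : ∀ i m, dualLin (a i) ^ m ∈ W) : powerSpan a ≤ W :=
  Submodule.span_le.mpr fun _ ⟨i, m, hG⟩ => hG ▸ h i m

lemma apol_mem_powerSpan (a : Fin r → Fin n → k) (g : MvPolynomial (Fin n) k)
    {F : MvPolynomial (Fin n) k} (hF : F ∈ powerSpan a) : apol g F ∈ powerSpan a := by
  refine powerSpan_le (W := (powerSpan a).comap (apolLinearMap g)) (fun i m => ?_) hF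
  change apol g _ ∈ powerSpan a
  rw [apol_dualLin_pow]
  exact Submodule.sum_mem _ fun d _ => Submodule.smul_mem _ _ (dualLin_pow_mem_powerSpan a i _)

lemma Rspan_le_powerSpan {a : Fin r → Fin n → k} {S : Set (MvPolynomial (Fin n) k)}
    (hS : S ⊆ powerSpan a) : Rspan S ≤ powerSpan a :=
  Rspan_le hS fun g _ => apol_mem_powerSpan a g

lemma apol_eq_zero_of_mem_projIdeal [Infinite k] {a : Fin r → Fin n → k}
    {g : MvPolynomial (Fin n) k} (hg : g ∈ projIdeal a) {F : MvPolynomial (Fin n) k}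
    (hF : F ∈ powerSpan a) : apol g F = 0 := by
  refine powerSpan_le (W := LinearMap.ker (apolLinearMap g)) (fun i m => ?_) hF
  change apol g _ = 0
  rw [apol_dualLin_pow]
  refine Finset.sum_eq_zero fun d _ => ?_
  rw [(mem_projIdeal_iff_homogeneousComponent a g).mp hg i d, mul_zero, zero_smul]

lemma mem_powerSpan_of_forall_apol_eq_zero [CharZero k] {a : Fin r → Fin n → k}
    {F : MvPolynomial (Fin n) k} (hF : ∀ g ∈ projIdeal a, apol g F = 0) : F ∈ powerSpan a := by
  rw [← F.sum_homogeneousComponent]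
  refine Submodule.sum_mem _ fun e _ => ?_
  suffices homogeneousComponent e F ∈ Submodule.span k {G | ∃ i, G = dualLin (a i) ^ e} from
    Submodule.span_mono (by rintro _ ⟨i, rfl⟩; exact ⟨i, e, rfl⟩) this
  rw [← Subspace.forall_mem_dualAnnihilator_apply_eq_zero_iff]
  intro φ hφ
  have hvanish : ∀ i, eval (a i) (dualForm e φ) = 0 := fun i => by
    have hφi := (Submodule.mem_dualAnnihilator φ).mp hφ _ (Submodule.subset_span ⟨i, rfl⟩)
    rw [← homogeneousComponent_eq_self (isHomogeneous_dualLin_pow (a i) e),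
      ← coeff_zero_apol_dualForm,
      coeff_zero_apol_dualLin_pow_of_isHomogeneous (isHomogeneous_dualForm e φ)] at hφi
    exact (mul_eq_zero.mp hφi).resolve_left (Nat.cast_ne_zero.mpr (Nat.factorial_ne_zero e))
  rw [← coeff_zero_apol_dualForm,
    hF _ (mem_projIdeal_of_isHomogeneous (isHomogeneous_dualForm e φ) hvanish), coeff_zero]

lemma eval_homogeneousComponent_eq_zero_of_apol [CharZero k] {a : Fin n → k} (ha : a ≠ 0)
    {g : MvPolynomial (Fin n) k} (h : apol g (dualLin a ^ (g.totalDegree + 1)) = 0) (e : ℕ) :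
    eval a (homogeneousComponent e g) = 0 := by
  set N := g.totalDegree + 1
  by_cases he : e < N
  swap
  · rw [homogeneousComponent_eq_zero _ _ (by omega), map_zero]
  have hcomp := congrArg (homogeneousComponent (N - e)) h
  rw [apol_dualLin_pow, map_sum, map_zero,
    Finset.sum_eq_single_of_mem e (Finset.mem_range.mpr he) fun d _ hde => ?_, map_smul,
    homogeneousComponent_eq_self (isHomogeneous_dualLin_pow a _)] at hcomp
  · have hdesc : (N.descFactorial e : k) ≠ 0 :=
      Nat.cast_ne_zero.mpr (Nat.descFactorial_eq_zero_iff_lt.not.mpr (by omega))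
    exact (mul_eq_zero.mp ((smul_eq_zero.mp hcomp).resolve_right
      (pow_ne_zero _ (dualLin_ne_zero ha)))).resolve_left hdesc
  · rw [map_smul, homogeneousComponent_of_mem ((mem_homogeneousSubmodule _ _).mpr
      (isHomogeneous_dualLin_pow a _)), if_neg (by omega), smul_zero]

lemma mem_projIdeal_of_forall_apol_eq_zero [CharZero k] {a : Fin r → Fin n → k}
    (ha : ∀ i, a i ≠ 0) {g : MvPolynomial (Fin n) k}
    (h : ∀ i, apol g (dualLin (a i) ^ (g.totalDegree + 1)) = 0) : g ∈ projIdeal a :=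
  (mem_projIdeal_iff_homogeneousComponent a g).mpr fun i =>
    eval_homogeneousComponent_eq_zero_of_apol (ha i) (h i)

end InverseSystem

section Generators

variable {n r : ℕ}

lemma exists_linearForm_separating {a : Fin r → Fin n → k} (ha : ProjDistinct a)
    {i j : Fin r} (hij : j ≠ i) :
    ∃ p : MvPolynomial (Fin n) k, p.IsHomogeneous 1 ∧ eval (a j) p = 0 ∧ eval (a i) p ≠ 0 := by
  obtain ⟨l, hl⟩ : ∃ l, a j l ≠ 0 := Function.ne_iff.mp (ha.1 j)
  obtain ⟨l', hl'⟩ : ∃ l', a j l * a i l' - a j l' * a i l ≠ 0 := by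
    by_contra! h
    refine ha.2 i j hij.symm (a i l / a j l) (funext fun l' => ?_)
    rw [Pi.smul_apply, smul_eq_mul, div_mul_eq_mul_div, eq_div_iff hl]
    linear_combination h l'
  refine ⟨C (a j l) * X l' - C (a j l') * X l,
    (isHomogeneous_C_mul_X _ _).sub (isHomogeneous_C_mul_X _ _), ?_, ?_⟩
  · simp only [map_sub, map_mul, eval_C, eval_X]
    ring
  · simpa only [map_sub, map_mul, eval_C, eval_X] using hl'

lemma exists_isHomogeneous_separating {a : Fin r → Fin n → k} (ha : ProjDistinct a)
    (i : Fin r) {d : ℕ} (hd : r - 1 ≤ d) :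
    ∃ g : MvPolynomial (Fin n) k, g.IsHomogeneous d ∧ eval (a i) g ≠ 0 ∧
      ∀ j, j ≠ i → eval (a j) g = 0 := by
  have hsep : ∀ j : Fin r, ∃ p : MvPolynomial (Fin n) k,
      p.IsHomogeneous 1 ∧ (j ≠ i → eval (a j) p = 0 ∧ eval (a i) p ≠ 0) := fun j => by
    by_cases hj : j = i
    · exact ⟨0, isHomogeneous_zero _ _ _, fun h => absurd hj h⟩
    · obtain ⟨p, hp, hpj, hpi⟩ := exists_linearForm_separating ha hj
      exact ⟨p, hp, fun _ => ⟨hpj, hpi⟩⟩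
  choose p hp hpij using hsep
  obtain ⟨l, hl⟩ : ∃ l, a i l ≠ 0 := Function.ne_iff.mp (ha.1 i)
  have hprod : (∏ j ∈ Finset.univ.erase i, p j).IsHomogeneous (r - 1) := by
    simpa [Finset.card_erase_of_mem] using
      IsHomogeneous.prod (Finset.univ.erase i) p (fun _ => 1) fun j _ => hp j
  refine ⟨(∏ j ∈ Finset.univ.erase i, p j) * X l ^ (d - (r - 1)), ?_, ?_, fun j hj => ?_⟩
  · simpa [Nat.add_sub_cancel' hd] using hprod.mul ((isHomogeneous_X k l).pow (d - (r - 1)))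
  · rw [map_mul, map_prod, map_pow, eval_X]
    exact mul_ne_zero (Finset.prod_ne_zero_iff.mpr fun j hj =>
      (hpij j (Finset.ne_of_mem_erase hj)).2) (pow_ne_zero _ hl)
  · rw [map_mul, map_prod, Finset.prod_eq_zero (Finset.mem_erase.mpr ⟨hj, Finset.mem_univ j⟩)
      (hpij j hj).1, zero_mul]

lemma apol_famF_of_isHomogeneous {g : MvPolynomial (Fin n) k} {d : ℕ} (hg : g.IsHomogeneous d)
    (a : Fin r → Fin n → k) (α : Fin r → k) (u t : ℕ) :
    apol g (famF a α u t) = ∑ j, ((((t + u).factorial : k))⁻¹ * α j *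
      ((t + u).descFactorial d * eval (a j) g)) • dualLin (a j) ^ (t + u - d) := by
  rw [famF, apol_smul_right, apol_sum_right, Finset.smul_sum]
  refine Finset.sum_congr rfl fun j _ => ?_
  rw [← smul_eq_C_mul, apol_smul_right, apol_dualLin_pow_of_isHomogeneous hg, smul_smul,
    smul_smul, mul_assoc]

lemma dualLin_pow_mem_Rspan_famF [CharZero k] {a : Fin r → Fin n → k} (ha : ProjDistinct a)
    {α : Fin r → k} (hα : ∀ i, α i ≠ 0) (u : ℕ) (i : Fin r) (m : ℕ) :
    dualLin (a i) ^ m ∈ Rspan (Set.range fun t : ℕ => famF a α u (t + 1)) := by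
  obtain ⟨g, hg, hgi, hgj⟩ := exists_isHomogeneous_separating ha i (d := r + 1 + u) (by omega)
  have happly := apol_famF_of_isHomogeneous hg a α u (r + m + 1)
  rw [Finset.sum_eq_single i (fun j _ hji => by rw [hgj j hji, mul_zero, mul_zero, zero_smul])
    (by simp), show r + m + 1 + u - (r + 1 + u) = m by omega] at happly
  have hc : (((r + m + 1 + u).factorial : k))⁻¹ * α i *
      ((r + m + 1 + u).descFactorial (r + 1 + u) * eval (a i) g) ≠ 0 :=
    mul_ne_zero
      (mul_ne_zero (inv_ne_zero (Nat.cast_ne_zero.mpr (Nat.factorial_ne_zero _))) (hα i))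
      (mul_ne_zero (Nat.cast_ne_zero.mpr (Nat.descFactorial_eq_zero_iff_lt.not.mpr (by omega)))
        hgi)
  rw [← inv_smul_smul₀ hc (dualLin (a i) ^ m), ← happly]
  exact Submodule.smul_mem _ _ (apol_mem_Rspan g ⟨r + m, rfl⟩)

lemma dualLin_pow_mem_Rspan_pows {a : Fin r → Fin n → k} (ha : ∀ i, a i ≠ 0) (i : Fin r)
    (m : ℕ) :
    dualLin (a i) ^ m ∈ Rspan {G | ∃ i : Fin r, ∃ t : ℕ, 1 ≤ t ∧ G = dualLin (a i) ^ t} := by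
  rcases m with _ | m
  · obtain ⟨j, hj⟩ : ∃ j, a i j ≠ 0 := Function.ne_iff.mp (ha i)
    have h := apol_dualLin_pow_of_isHomogeneous (isHomogeneous_X k j) (a i) 1
    rw [eval_X, Nat.descFactorial_self, Nat.factorial_one, Nat.cast_one, one_mul] at h
    rw [← inv_smul_smul₀ hj (dualLin (a i) ^ 0), ← h]
    exact Submodule.smul_mem _ _ (apol_mem_Rspan _ ⟨i, 1, le_rfl, rfl⟩)
  · exact subset_Rspan _ ⟨i, m + 1, by omega, rfl⟩

end Generators

section Identification

variable {n r : ℕ}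

lemma famF_mem_powerSpan (a : Fin r → Fin n → k) (α : Fin r → k) (u t : ℕ) :
    famF a α u t ∈ powerSpan a := by
  refine Submodule.smul_mem _ _ (Submodule.sum_mem _ fun i _ => ?_)
  rw [← smul_eq_C_mul]
  exact Submodule.smul_mem _ _ (dualLin_pow_mem_powerSpan a i _)

lemma Rspan_famF_eq_powerSpan [CharZero k] {a : Fin r → Fin n → k} (ha : ProjDistinct a)
    {α : Fin r → k} (hα : ∀ i, α i ≠ 0) (u : ℕ) :
    Rspan (Set.range fun t : ℕ => famF a α u (t + 1)) = powerSpan a :=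
  le_antisymm (Rspan_le_powerSpan (by rintro _ ⟨t, rfl⟩; exact famF_mem_powerSpan a α u _))
    (powerSpan_le (dualLin_pow_mem_Rspan_famF ha hα u))

lemma Rspan_pows_eq_powerSpan {a : Fin r → Fin n → k} (ha : ∀ i, a i ≠ 0) :
    Rspan {G | ∃ i : Fin r, ∃ t : ℕ, 1 ≤ t ∧ G = dualLin (a i) ^ t} = powerSpan a :=
  le_antisymm
    (Rspan_le_powerSpan (by rintro _ ⟨i, t, -, rfl⟩; exact dualLin_pow_mem_powerSpan a i t))
    (powerSpan_le (dualLin_pow_mem_Rspan_pows ha))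

lemma coe_powerSpan_eq_perp [CharZero k] (a : Fin r → Fin n → k) :
    (powerSpan a : Set (MvPolynomial (Fin n) k)) = perp (projIdeal a : Set _) :=
  Set.ext fun _ => ⟨fun hF _ hg => apol_eq_zero_of_mem_projIdeal hg hF,
    mem_powerSpan_of_forall_apol_eq_zero⟩

lemma coe_projIdeal_eq_annihilator [CharZero k] {a : Fin r → Fin n → k} (ha : ∀ i, a i ≠ 0) :
    (projIdeal a : Set (MvPolynomial (Fin n) k)) = {g | ∀ G ∈ powerSpan a, apol g G = 0} :=
  Set.ext fun _ => ⟨fun hg _ hG => apol_eq_zero_of_mem_projIdeal hg hG, fun h =>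
    mem_projIdeal_of_forall_apol_eq_zero ha fun i => h _ (dualLin_pow_mem_powerSpan a i _)⟩

end Identification

theorem stmt6_general [CharZero k] (n r u : ℕ)
    (a : Fin r → Fin (n + 1) → k) (ha : ProjDistinct a)
    (α : Fin r → k) (hα : ∀ i, α i ≠ 0) :
    Rspan (Set.range fun t : ℕ => famF a α u (t + 1))
        = Rspan {G | ∃ i : Fin r, ∃ t : ℕ, 1 ≤ t ∧ G = dualLin (a i) ^ t}
    ∧ ((Rspan (Set.range fun t : ℕ => famF a α u (t + 1)) :
          Submodule k (MvPolynomial (Fin (n + 1)) k)) : Set (MvPolynomial (Fin (n + 1)) k))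
        = perp ((projIdeal a : Ideal (MvPolynomial (Fin (n + 1)) k)) : Set (MvPolynomial (Fin (n + 1)) k))
    ∧ ((projIdeal a : Ideal (MvPolynomial (Fin (n + 1)) k)) : Set (MvPolynomial (Fin (n + 1)) k))
        = {g | ∀ G ∈ (Rspan (Set.range fun t : ℕ => famF a α u (t + 1)) :
            Submodule k (MvPolynomial (Fin (n + 1)) k)), apol g G = 0} := by
  rw [Rspan_famF_eq_powerSpan ha hα u, Rspan_pows_eq_powerSpan ha.1]
  exact ⟨rfl, coe_powerSpan_eq_perp a, coe_projIdeal_eq_annihilator ha.1⟩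

/-- the `R`-submodule generated by the `F_t` equals the one generated by the
powers `L_i^t`; it is `I(X)^⊥`, and `I(X)` is its annihilator. -/
theorem stmt6 [CharZero k] [IsAlgClosed k] (n r s u : ℕ) (hu : 1 ≤ u)
    (a : Fin r → Fin (n + 1) → k) (ha : ProjDistinct a)
    (hs : IsSocleDegree (projIdeal a) r s)
    (α : Fin r → k) (hα : ∀ i, α i ≠ 0) :
    Rspan (Set.range fun t : ℕ => famF a α u (t + 1))
        = Rspan {G | ∃ i : Fin r, ∃ t : ℕ, 1 ≤ t ∧ G = dualLin (a i) ^ t}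
    ∧ ((Rspan (Set.range fun t : ℕ => famF a α u (t + 1)) :
          Submodule k (MvPolynomial (Fin (n + 1)) k)) : Set (MvPolynomial (Fin (n + 1)) k))
        = perp ((projIdeal a : Ideal (MvPolynomial (Fin (n + 1)) k)) : Set (MvPolynomial (Fin (n + 1)) k))
    ∧ ((projIdeal a : Ideal (MvPolynomial (Fin (n + 1)) k)) : Set (MvPolynomial (Fin (n + 1)) k))
        = {g | ∀ G ∈ (Rspan (Set.range fun t : ℕ => famF a α u (t + 1)) :
            Submodule k (MvPolynomial (Fin (n + 1)) k)), apol g G = 0} :=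
  stmt6_general n r u a ha α hα

end
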